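/- R₂ is a monomial ring: if v₁,...,v_k are formally distinct nonzero monomials in s, t and n₁v₁ + ... + n_kv_k = 0 in R₂ with integer coefficients n_i, then n_i = 0 for all i. In particular R₂ is torsion-free as an additive group. -/

import Mathlib

/-!
The tree-indexed vector space `V` over `ℚ` with basis the free monoid on two letters
(encoded as `List Bool`, with `false` the letter `0` and `true` the letter `1`).
The recursive matrices `s = [[0,0],[1,0]]` and `t = [[0,t],[0,s]]` of the ring `R₂`
act on the decomposition `V = ℚ·φ ⊕ 0V ⊕ 1V` by the block-matrix recursion.
-/

noncomputable section

abbrev V : Type := List Bool →₀ ℚ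

/-- Prefixing by a letter: the embedding `V → yV`. -/
def pre (b : Bool) : V →ₗ[ℚ] V := Finsupp.lmapDomain ℚ ℚ (List.cons b)

/-- Value of `s = [[0,0],[1,0]]` on a basis word. -/
def Sfun : List Bool → V
  | [] => 0
  | false :: u => Finsupp.single (true :: u) 1
  | true :: _ => 0

/-- Value of `t = [[0,t],[0,s]]` on a basis word, by recursion. -/
def Tfun : List Bool → V
  | [] => 0
  | false :: _ => 0
  | true :: u => pre false (Tfun u) + pre true (Sfun u)

/-- The generator `s` of `R₂`. -/
def sR : Module.End ℚ V := Finsupp.linearCombination ℚ Sfun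

/-- The generator `t` of `R₂`. -/
def tR : Module.End ℚ V := Finsupp.linearCombination ℚ Tfun

/-- The level-preserving operator with block form `[[e,0,0],[0,A,B],[0,C,D]]` on
`V = ℚ·φ ⊕ 0V ⊕ 1V`, written `e ⊕ [[A,B],[C,D]]`. -/
def blk (e : ℚ) (A B C D : Module.End ℚ V) : Module.End ℚ V :=
  Finsupp.linearCombination ℚ (fun w => match w with
    | [] => Finsupp.single ([] : List Bool) e
    | false :: u => pre false (A (Finsupp.single u 1)) + pre true (C (Finsupp.single u 1))
    | true :: u => pre false (B (Finsupp.single u 1)) + pre true (D (Finsupp.single u 1)))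

/-- The monomial in `s, t` given by a word (`false ↦ s`, `true ↦ t`). -/
def mono (w : List Bool) : Module.End ℚ V :=
  (w.map (fun b => if b then tR else sR)).prod

/-- The ring `R₂` generated by `s` and `t` (a non-unital subring of `End ℚ V`). -/
def R2 : NonUnitalSubring (Module.End ℚ V) := NonUnitalSubring.closure {sR, tR}

end

/-!
On basis words each generator, and hence each monomial, acts as a partial map: a word goes to
a word or to `0`. Only one generator acts on a given word (`s` needs leading letter `0`, `t`
leading letter `1`), and every step strictly increases the binary value of the word. So the
trajectory of a word is deterministic and never revisits a word, and a nonzero monomial is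
determined by any pair `u ↦ z` it realises. Reading off the `(u, z)` entry of a relation
`∑ nᵢ vᵢ = 0` at such a pair for `vᵢ` isolates `nᵢ`. Torsion-freeness holds because `R₂` lies
in a `ℚ`-algebra.
-/

theorem LinearIndependent.of_biorthogonal {ι R M : Type*} [Semiring R] [AddCommMonoid M]
    [Module R M] [DecidableEq ι] {f : ι → M} (φ : ι → M →ₗ[R] R)
    (h : ∀ i j, φ i (f j) = if i = j then 1 else 0) : LinearIndependent R f := by
  have hφf : LinearMap.pi φ ∘ f = fun j => Pi.single j 1 := by
    ext j i
    simp [h, Pi.single_apply]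
  exact .of_comp (LinearMap.pi φ) (hφf ▸ Pi.linearIndependent_single_one ι R)

namespace MonomialRing

noncomputable def gen (b : Bool) : Module.End ℚ V := if b then tR else sR

/-- `gen b` on basis words: `s` maps `0u ↦ 1u`, `t` maps `1ᵏ0u ↦ 0ᵏ⁻¹11u` (`k ≥ 1`), and
every other word goes to `0`, encoded as `none`. -/
def step : Bool → List Bool → Option (List Bool)
  | false, false :: u => some (true :: u)
  | true, true :: false :: u => some (true :: true :: u)
  | true, true :: true :: u => (step true (true :: u)).map (List.cons false)
  | _, _ => none

/-- Applies the letters of a word from left to right, so `mono w` acts as `run w.reverse`. -/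
def run : List Bool → List Bool → Option (List Bool)
  | [], u => some u
  | a :: w, u => (step a u).bind (run w)

noncomputable def basisVec : Option (List Bool) → V
  | none => 0
  | some z => Finsupp.single z 1

/-- The binary value of a word, least significant digit first. -/
def binVal : List Bool → ℕ
  | [] => 0
  | b :: u => b.toNat + 2 * binVal u

theorem mono_cons (a : Bool) (w : List Bool) : mono (a :: w) = gen a * mono w := by
  simp [mono, gen]

theorem pre_single (b : Bool) (z : List Bool) :
    pre b (Finsupp.single z 1) = Finsupp.single (b :: z) 1 := by
  simp [pre, Finsupp.mapDomain_single]

theorem Sfun_eq_basisVec_step (u : List Bool) : Sfun u = basisVec (step false u) := by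
  match u with
  | [] | false :: _ | true :: _ => rfl

theorem Tfun_eq_basisVec_step : ∀ u : List Bool, Tfun u = basisVec (step true u)
  | [] | false :: _ | [true] => by simp [Tfun, Sfun, step, basisVec]
  | true :: false :: _ => by simp [Tfun, Sfun, step, basisVec, pre_single]
  | true :: true :: v => by
      rw [Tfun, Tfun_eq_basisVec_step (true :: v), step]
      cases step true (true :: v) <;> simp [Sfun, basisVec, pre_single]

theorem gen_single (b : Bool) (u : List Bool) :
    gen b (Finsupp.single u 1) = basisVec (step b u) := by
  cases b
  · simp [gen, sR, Sfun_eq_basisVec_step]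
  · simp [gen, tR, Tfun_eq_basisVec_step]

theorem gen_basisVec (b : Bool) (o : Option (List Bool)) :
    gen b (basisVec o) = basisVec (o.bind (step b)) := by
  cases o
  · simp [basisVec]
  · exact gen_single b _

theorem run_append (w₁ w₂ u : List Bool) : run (w₁ ++ w₂) u = (run w₁ u).bind (run w₂) := by
  induction w₁ generalizing u with
  | nil => rfl
  | cons a w ih => cases h : step a u <;> simp [run, h, ih]

theorem mono_single (w u : List Bool) :
    mono w (Finsupp.single u 1) = basisVec (run w.reverse u) := by
  induction w with
  | nil => rfl
  | cons a w ih =>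
      rw [mono_cons, Module.End.mul_apply, ih, gen_basisVec, List.reverse_cons, run_append]
      cases run w.reverse u <;> simp [run]

theorem head?_of_step {b : Bool} {u y : List Bool} (h : step b u = some y) : u.head? = some b := by
  match b, u with
  | false, false :: _ | true, true :: _ => rfl
  | false, [] | false, true :: _ | true, [] | true, false :: _ => simp [step] at h

theorem binVal_lt_of_step {b : Bool} {u y : List Bool} (h : step b u = some y) :
    binVal u < binVal y := by
  match b, u, h with
  | false, false :: _, h | true, true :: false :: _, h =>
      simp only [step, Option.some.injEq] at h; subst h; simp [binVal]
  | true, true :: true :: v, h =>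
      obtain ⟨y', hy', rfl⟩ := Option.map_eq_some_iff.mp h
      have := binVal_lt_of_step hy'
      simp only [binVal, Bool.toNat_true, Bool.toNat_false] at this ⊢
      omega

theorem binVal_add_length_le_of_run {w u z : List Bool} (h : run w u = some z) :
    binVal u + w.length ≤ binVal z := by
  induction w generalizing u with
  | nil => cases h; simp
  | cons a w ih =>
      obtain ⟨y, hy, hz⟩ := Option.bind_eq_some_iff.mp h
      have := binVal_lt_of_step hy
      have := ih hz
      simp only [List.length_cons]
      omega

theorem run_injective {w w' u z : List Bool} (h : run w u = some z) (h' : run w' u = some z) :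
    w = w' := by
  induction w generalizing w' u with
  | nil =>
      cases h
      have := binVal_add_length_le_of_run h'
      exact (List.length_eq_zero_iff.mp (by omega)).symm
  | cons a w ih =>
      cases w' with
      | nil =>
          cases h'
          have := binVal_add_length_le_of_run h
          simp at this
      | cons a' w' =>
          obtain ⟨y, hy, hz⟩ := Option.bind_eq_some_iff.mp h
          obtain ⟨y', hy', hz'⟩ := Option.bind_eq_some_iff.mp h'
          obtain rfl : a = a' :=
            Option.some_inj.mp ((head?_of_step hy).symm.trans (head?_of_step hy'))
          obtain rfl : y = y' := Option.some_inj.mp (hy.symm.trans hy')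
          rw [ih hz hz']

theorem exists_run_eq_some_of_mono_ne_zero {w : List Bool} (h : mono w ≠ 0) :
    ∃ u z, run w.reverse u = some z := by
  contrapose! h
  refine Finsupp.lhom_ext' fun u => LinearMap.ext_ring ?_
  rw [LinearMap.comp_apply, Finsupp.lsingle_apply, mono_single]
  cases hu : run w.reverse u with
  | none => rfl
  | some z => exact absurd hu (h u z)

theorem linearIndependent_mono :
    LinearIndependent ℚ (fun w : {w : List Bool // mono w ≠ 0} => mono w) := by
  classical
  choose u z huz using fun w : {w : List Bool // mono w ≠ 0} =>
    exists_run_eq_some_of_mono_ne_zero w.2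
  refine .of_biorthogonal
    (fun w => Finsupp.lapply (z w) ∘ₗ LinearMap.applyₗ (Finsupp.single (u w) 1)) fun w w' => ?_
  simp only [LinearMap.comp_apply, LinearMap.applyₗ_apply_apply, Finsupp.lapply_apply, mono_single]
  split_ifs with hw
  · subst hw
    simp [huz, basisVec]
  · cases hr : run w'.1.reverse (u w) with
    | none => rfl
    | some z' =>
        refine Finsupp.single_eq_of_ne fun hz => hw ?_
        subst hz
        exact Subtype.ext (List.reverse_injective (run_injective (huz w) hr))

end MonomialRing

open MonomialRing

/-- `R₂` is a monomial ring: formally distinct nonzero monomials are `ℤ`-linearly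
independent, and in particular `R₂` is torsion-free as an additive group. -/
theorem monomial_ring :
    (∀ (k : ℕ) (v : Fin k → List Bool) (n : Fin k → ℤ),
      (∀ i, v i ≠ []) → (∀ i, mono (v i) ≠ 0) → Function.Injective v →
      (∑ i, n i • mono (v i)) = 0 → ∀ i, n i = 0) ∧
    (∀ x ∈ R2, ∀ n : ℤ, n ≠ 0 → n • x = 0 → x = 0) := by
  refine ⟨fun k v n _ hv hinj hsum => ?_, fun x _ n hn hx => (smul_eq_zero.mp hx).resolve_left hn⟩
  have hind : LinearIndependent ℤ (fun i => mono (v i)) :=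
    (linearIndependent_mono.restrict_scalars' ℤ).comp (fun i => ⟨v i, hv i⟩)
      fun i j h => hinj (congrArg Subtype.val h)
  exact Fintype.linearIndependent_iff.mp hind n hsum
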